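/- Let ξ_1, …, ξ_n be i.i.d. standard normal, let q ≤ 0.4·n be a positive integer, and write m = Φ̄^{−1}(q/n) ≥ 0. Then for every x with 0 < x ≤ q/8, the q-th smallest order statistic ξ_{(q)} satisfies P( ξ_{(q)} + m ≤ −(2/m)·√(2x/q) ) ≤ e^{−x}. -/

import Mathlib

open MeasureTheory ProbabilityTheory Real

/-- Standard normal density. -/
noncomputable def gphi (t : ℝ) : ℝ := (Real.sqrt (2 * Real.pi))⁻¹ * Real.exp (-(t ^ 2) / 2)

/-- Standard normal upper-tail (survival) function. -/
noncomputable def Phibar (t : ℝ) : ℝ := ∫ s in Set.Ioi t, gphi s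

/-- Inverse of the standard normal upper-tail function. -/
noncomputable def PhibarInv (x : ℝ) : ℝ := Function.invFun Phibar x

/-- The `q`-th smallest value among `ξ 0, …, ξ (n-1)`. -/
noncomputable def orderStat {n : ℕ} (ξ : Fin n → ℝ) (q : ℕ) : ℝ :=
  sInf {t : ℝ | q ≤ (Finset.univ.filter fun i => ξ i ≤ t).card}

/-!
Put `c = m + (2 / m) √(2x/q)` and `p = Φ̄(c)`. The event `ξ_(q) ≤ -c` says that at least `q`
of the independent events `{ξ_i ≤ -c}`, each of probability `p`, occur. Since `Φ̄(m) = q / n`,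
the mean-value bound `Φ̄(m) - Φ̄(c) ≥ (c - m) φ(c)` together with the Mills ratio bound
`c Φ̄(c) ≤ φ(c)` gives `n p ≤ q (1 - √(2x/q))`. Chernoff's bound at the exponent
`log (q / (n p))` and `-log (1 - u) ≥ u + u² / 2` then bound the binomial tail by
`exp (-(q - n p)² / (2q)) ≤ exp (-x)`.
-/

open Set Filter Topology

lemma gphi_eq_gaussianPDFReal : gphi = gaussianPDFReal 0 1 := by
  ext t
  simp only [gphi, gaussianPDFReal, NNReal.coe_one, mul_one, sub_zero, neg_div]

lemma gphi_pos (t : ℝ) : 0 < gphi t := by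
  unfold gphi; positivity

lemma integrable_gphi : Integrable gphi :=
  gphi_eq_gaussianPDFReal ▸ integrable_gaussianPDFReal 0 1

lemma gphi_neg (t : ℝ) : gphi (-t) = gphi t := by simp [gphi]

lemma gphi_le_gphi {a b : ℝ} (ha : 0 ≤ a) (hab : a ≤ b) : gphi b ≤ gphi a := by
  unfold gphi
  gcongr

lemma gphi_le_one (t : ℝ) : gphi t ≤ 1 :=
  mul_le_one₀ (inv_le_one_of_one_le₀ (Real.one_le_sqrt.2 (by linarith [Real.pi_gt_three])))
    (exp_pos _).le (Real.exp_le_one_iff.2 (by nlinarith [sq_nonneg t]))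

lemma Phibar_sub_Phibar (a b : ℝ) : Phibar a - Phibar b = ∫ s in a..b, gphi s :=
  intervalIntegral.integral_Ioi_sub_Ioi' integrable_gphi.integrableOn integrable_gphi.integrableOn

lemma Phibar_antitone : Antitone Phibar := fun a b hab =>
  sub_nonneg.1 <| Phibar_sub_Phibar a b ▸
    intervalIntegral.integral_nonneg hab fun s _ => (gphi_pos s).le

lemma Phibar_pos (t : ℝ) : 0 < Phibar t := by
  rw [Phibar, setIntegral_pos_iff_support_of_nonneg_ae (ae_of_all _ fun s => (gphi_pos s).le)
    integrable_gphi.integrableOn, Function.support_eq_univ fun s => (gphi_pos s).ne',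
    univ_inter, Real.volume_Ioi]
  exact ENNReal.zero_lt_top

lemma continuous_Phibar : Continuous Phibar := by
  have h : Phibar = fun t => Phibar 0 - ∫ s in (0 : ℝ)..t, gphi s := by
    ext t; rw [← Phibar_sub_Phibar]; ring
  rw [h]
  exact continuous_const.sub (integrable_gphi.continuous_primitive 0)

lemma Phibar_zero : Phibar 0 = 1 / 2 := by
  have hsym : ∫ s in Iic (0 : ℝ), gphi s = ∫ s in Ioi (0 : ℝ), gphi s := by
    simpa only [gphi_neg, neg_zero] using integral_comp_neg_Iic (0 : ℝ) gphi
  have htot : (∫ s in Iic (0 : ℝ), gphi s) + ∫ s in Ioi (0 : ℝ), gphi s = 1 := by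
    rw [intervalIntegral.integral_Iic_add_Ioi integrable_gphi.integrableOn
      integrable_gphi.integrableOn, gphi_eq_gaussianPDFReal,
      integral_gaussianPDFReal_eq_one 0 one_ne_zero]
  rw [Phibar]; linarith

lemma hasDerivAt_gphi (u : ℝ) : HasDerivAt gphi (-u * gphi u) u := by
  have h : HasDerivAt (fun s : ℝ => -s ^ 2 / 2) (-u) u := by
    simpa [neg_div] using ((hasDerivAt_pow 2 u).div_const 2).fun_neg
  exact (h.exp.const_mul (√(2 * π))⁻¹).congr_deriv (by unfold gphi; ring)

lemma integrable_mul_gphi : Integrable fun u => u * gphi u := by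
  refine ((integrable_mul_exp_neg_mul_sq (b := 1 / 2) (by norm_num)).const_mul
    (√(2 * π))⁻¹).congr (ae_of_all _ fun u => ?_)
  simp only [gphi]; ring_nf

lemma tendsto_gphi_atTop : Tendsto gphi atTop (𝓝 0) := by
  have h : Tendsto (fun u : ℝ => -u ^ 2 / 2) atTop atBot :=
    (tendsto_neg_atBot_iff.2 (tendsto_pow_atTop two_ne_zero)).atBot_div_const two_pos
  have := (Real.tendsto_exp_atBot.comp h).const_mul (√(2 * π))⁻¹
  rwa [mul_zero] at this

lemma integral_Ioi_mul_gphi (s : ℝ) : ∫ u in Ioi s, u * gphi u = gphi s := by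
  have h := integral_Ioi_of_hasDerivAt_of_tendsto' (a := s) (f := fun u => -gphi u)
    (fun u _ => (hasDerivAt_gphi u).fun_neg.congr_deriv (by ring))
    integrable_mul_gphi.integrableOn (by simpa using tendsto_gphi_atTop.neg)
  rw [h]; ring

lemma mul_Phibar_le_gphi (s : ℝ) : s * Phibar s ≤ gphi s := by
  rw [Phibar, ← integral_const_mul, ← integral_Ioi_mul_gphi s]
  exact setIntegral_mono_on (integrable_gphi.integrableOn.const_mul s)
    integrable_mul_gphi.integrableOn measurableSet_Ioi
    fun u hu => mul_le_mul_of_nonneg_right (le_of_lt hu) (gphi_pos u).le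

lemma sub_mul_gphi_le_Phibar_sub {a b : ℝ} (ha : 0 ≤ a) (hab : a ≤ b) :
    (b - a) * gphi b ≤ Phibar a - Phibar b := by
  rw [Phibar_sub_Phibar]
  calc (b - a) * gphi b = ∫ _ in a..b, gphi b := by simp
    _ ≤ ∫ s in a..b, gphi s := intervalIntegral.integral_mono_on hab intervalIntegrable_const
          integrable_gphi.intervalIntegrable fun s hs => gphi_le_gphi (ha.trans hs.1) hs.2

lemma Phibar_add_le {m t : ℝ} (hm : 0 ≤ m) (ht : 0 ≤ t) (hmt : m * t ≤ 1) :
    Phibar (m + t) ≤ Phibar m * (1 - m * t / 2) := by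
  rcases le_total (Phibar (m + t)) (Phibar m / 2) with hsmall | hlarge
  · nlinarith [Phibar_pos m]
  · -- `t (m + t) Φ̄(m + t) ≤ t φ(m + t) ≤ Φ̄(m) - Φ̄(m + t)`, and `Φ̄(m + t) ≥ Φ̄(m) / 2`
    have hmv := sub_mul_gphi_le_Phibar_sub hm (le_add_of_nonneg_right ht)
    rw [add_sub_cancel_left] at hmv
    have hmills := mul_le_mul_of_nonneg_left (mul_Phibar_le_gphi (m + t)) ht
    nlinarith [mul_nonneg ht hm, mul_nonneg ht ht, (Phibar_pos (m + t)).le]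

lemma Phibar_surjOn : SurjOn Phibar (Ici 0) (Ioc 0 (1 / 2)) := by
  rintro r ⟨hr0, hr⟩
  have hb : Phibar r⁻¹ ≤ r := by
    have := (mul_Phibar_le_gphi r⁻¹).trans (gphi_le_one _)
    rwa [inv_mul_le_iff₀ hr0, mul_one] at this
  obtain ⟨y, hy, hPy⟩ := intermediate_value_Icc' (inv_nonneg.2 hr0.le)
    continuous_Phibar.continuousOn ⟨hb, Phibar_zero ▸ hr⟩
  exact ⟨y, hy.1, hPy⟩

lemma Phibar_PhibarInv {r : ℝ} (hr : r ∈ Ioc 0 (1 / 2)) : Phibar (PhibarInv r) = r :=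
  Function.invFun_eq <| (Phibar_surjOn hr).imp fun _ h => h.2

lemma pos_of_Phibar_lt_half {m : ℝ} (h : Phibar m < 1 / 2) : 0 < m := by
  by_contra! hm
  exact h.not_ge (Phibar_zero ▸ Phibar_antitone hm)

lemma gaussianReal_real_Iic_neg (c : ℝ) : (gaussianReal 0 1).real (Iic (-c)) = Phibar c := by
  rw [measureReal_def, gaussianReal_apply_eq_integral 0 one_ne_zero, ← gphi_eq_gaussianPDFReal,
    ENNReal.toReal_ofReal (setIntegral_nonneg measurableSet_Iic fun s _ => (gphi_pos s).le),
    Phibar]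
  simpa only [gphi_neg, neg_neg] using integral_comp_neg_Iic (-c) gphi

section OrderStatistic

open Finset

variable {n q : ℕ}

lemma isLeast_orderStat (ξ : Fin n → ℝ) (hq : 1 ≤ q) (hqn : q ≤ n) :
    IsLeast {t | q ≤ #{i | ξ i ≤ t}} (orderStat ξ q) := by
  set S := {t : ℝ | q ≤ #{i | ξ i ≤ t}}
  -- the largest `ξ i` counted at level `t` is itself in `S`
  have hwit : ∀ t ∈ S, ∃ i, ξ i ∈ S ∧ ξ i ≤ t := by
    intro t ht
    obtain ⟨i, hi, hmax⟩ := exists_max_image {i | ξ i ≤ t} ξ (card_pos.1 (hq.trans ht))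
    refine ⟨i, ht.trans (card_le_card fun j hj => ?_), (mem_filter.1 hi).2⟩
    exact mem_filter.2 ⟨mem_univ j, hmax j hj⟩
  obtain ⟨M, hM⟩ := (Set.finite_range ξ).bddAbove
  have hMS : M ∈ S := by
    simp only [S, Set.mem_ofPred_eq, filter_true_of_mem fun i _ => hM ⟨i, rfl⟩, card_univ,
      Fintype.card_fin, hqn]
  obtain ⟨i₀, hi₀S, -⟩ := hwit M hMS
  obtain ⟨w, ⟨hwS, -⟩, hwmin⟩ := Set.exists_min_image (S ∩ Set.range ξ) id
    ((Set.finite_range ξ).inter_of_right S) ⟨ξ i₀, hi₀S, i₀, rfl⟩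
  have hleast : IsLeast S w := ⟨hwS, fun t ht => by
    obtain ⟨i, hiS, hit⟩ := hwit t ht
    exact (hwmin _ ⟨hiS, i, rfl⟩).trans hit⟩
  rwa [orderStat, hleast.csInf_eq]

lemma orderStat_le_iff (ξ : Fin n → ℝ) (hq : 1 ≤ q) (hqn : q ≤ n) (c : ℝ) :
    orderStat ξ q ≤ c ↔ q ≤ #{i | ξ i ≤ c} := by
  have hmono : Monotone fun t => #{i | ξ i ≤ t} := fun t t' htt' =>
    card_le_card fun i hi => by
      simp only [mem_filter] at hi ⊢
      exact ⟨hi.1, hi.2.trans htt'⟩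
  have hleast := isLeast_orderStat ξ hq hqn
  exact ⟨fun h => hleast.1.trans (hmono h), fun h => hleast.2 h⟩

lemma setOf_orderStat_le_eq {Ω : Type*} (ξ : Fin n → Ω → ℝ) (hq : 1 ≤ q) (hqn : q ≤ n)
    (c : ℝ) :
    {ω | orderStat (fun i => ξ i ω) q ≤ c} =
      {ω | (q : ℝ) ≤ ∑ i, {ω | ξ i ω ≤ c}.indicator (1 : Ω → ℝ) ω} := by
  ext ω
  simp only [Set.mem_ofPred_eq, orderStat_le_iff _ hq hqn, Set.indicator_apply, Pi.one_apply,
    sum_boole, Nat.cast_le]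

end OrderStatistic

lemma add_sq_div_two_le_neg_log_one_sub {u : ℝ} (h0 : 0 ≤ u) (h1 : u < 1) :
    u + u ^ 2 / 2 ≤ -log (1 - u) := by
  have := sum_le_hasSum (Finset.range 2) (fun i _ => by positivity)
    (Real.hasSum_pow_div_log_of_abs_lt_one (by rwa [abs_of_nonneg h0]))
  norm_num [Finset.sum_range_succ] at this
  exact this

lemma sq_sub_div_le_mul_log_div_sub {a b : ℝ} (ha : 0 < a) (hab : a ≤ b) :
    (b - a) ^ 2 / (2 * b) ≤ b * log (b / a) - (b - a) := by
  have hb : 0 < b := ha.trans_le hab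
  have h := add_sq_div_two_le_neg_log_one_sub (u := (b - a) / b) (by positivity)
    ((div_lt_one hb).2 (by linarith))
  rw [show 1 - (b - a) / b = (b / a)⁻¹ by field_simp; ring, Real.log_inv, neg_neg] at h
  have := mul_le_mul_of_nonneg_left h hb.le
  calc (b - a) ^ 2 / (2 * b) = b * ((b - a) / b + ((b - a) / b) ^ 2 / 2) - (b - a) := by
        field_simp; ring
    _ ≤ b * log (b / a) - (b - a) := by linarith

section Probability

variable {Ω : Type*} [MeasurableSpace Ω] {P : Measure Ω}

lemma measureReal_setOf_le_neg_of_map_eq_gaussianReal {X : Ω → ℝ} (hX : Measurable X)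
    (hlaw : P.map X = gaussianReal 0 1) (c : ℝ) : P.real {ω | X ω ≤ -c} = Phibar c := by
  rw [← gaussianReal_real_Iic_neg, ← hlaw, map_measureReal_apply hX measurableSet_Iic]
  rfl

lemma ProbabilityTheory.iIndepFun.indicator_setOf_le {ι : Type*} {ξ : ι → Ω → ℝ}
    (h : iIndepFun ξ P) (c : ℝ) :
    iIndepFun (fun i => {ω | ξ i ω ≤ c}.indicator (1 : Ω → ℝ)) P := by
  convert h.comp (fun _ => (Iic c).indicator (1 : ℝ → ℝ))
    (fun _ => measurable_one.indicator measurableSet_Iic) using 1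
  ext i ω
  by_cases hc : ξ i ω ≤ c <;> simp [hc]

variable [IsProbabilityMeasure P]

lemma mgf_indicator_one {A : Set Ω} (hA : MeasurableSet A) (t : ℝ) :
    mgf (A.indicator 1) P t = 1 + P.real A * (rexp t - 1) := by
  have h : (fun ω => rexp (t * A.indicator 1 ω)) =
      fun ω => 1 + A.indicator (fun _ => rexp t - 1) ω := by
    ext ω; by_cases hω : ω ∈ A <;> simp [hω]
  rw [mgf, h, integral_add (integrable_const 1) ((integrable_const _).indicator hA),
    integral_indicator_const _ hA]
  simp [mul_comm]

lemma mgf_indicator_one_le_exp {A : Set Ω} (hA : MeasurableSet A) (t : ℝ) :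
    mgf (A.indicator 1) P t ≤ rexp (P.real A * (rexp t - 1)) := by
  rw [mgf_indicator_one hA]
  linarith [add_one_le_exp (P.real A * (rexp t - 1))]

variable {ι : Type*} [Fintype ι] {A : ι → Set Ω}

lemma mgf_sum_indicator_le_exp (hA : ∀ i, MeasurableSet (A i))
    (hindep : iIndepFun (fun i => (A i).indicator (1 : Ω → ℝ)) P) (t : ℝ) :
    mgf (∑ i, (A i).indicator 1) P t ≤ rexp ((∑ i, P.real (A i)) * (rexp t - 1)) := by
  rw [hindep.mgf_sum fun i => (measurable_one (α := ℝ)).indicator (hA i), Finset.sum_mul,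
    exp_sum]
  exact Finset.prod_le_prod (fun i _ => mgf_nonneg) fun i _ => mgf_indicator_one_le_exp (hA i) t

theorem measureReal_le_sum_indicator_le_exp (hA : ∀ i, MeasurableSet (A i))
    (hindep : iIndepFun (fun i => (A i).indicator (1 : Ω → ℝ)) P) {q : ℝ}
    (hpos : 0 < ∑ i, P.real (A i)) (hq : ∑ i, P.real (A i) ≤ q) :
    P.real {ω | q ≤ ∑ i, (A i).indicator (1 : Ω → ℝ) ω} ≤
      rexp (-(q - ∑ i, P.real (A i)) ^ 2 / (2 * q)) := by
  set μ := ∑ i, P.real (A i)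
  set S : Ω → ℝ := ∑ i, (A i).indicator 1 with hS
  have hS_meas : Measurable S := by rw [hS]; fun_prop (disch := exact hA _)
  have hS_le : ∀ ω, S ω ≤ Fintype.card ι := fun ω => by
    simpa [hS] using Finset.sum_le_card_nsmul Finset.univ
      (fun i => (A i).indicator (1 : Ω → ℝ) ω) 1
      fun i _ => Set.indicator_le_self' (fun _ _ => zero_le_one) ω
  -- the exponent minimising Chernoff's bound `exp (-l q) * exp (μ (exp l - 1))`
  set l := log (q / μ)
  have hl : 0 ≤ l := log_nonneg ((one_le_div hpos).2 hq)
  have hexp_l : rexp l = q / μ := exp_log (div_pos (hpos.trans_le hq) hpos)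
  have hint : Integrable (fun ω => rexp (l * S ω)) P :=
    Integrable.of_bound (hS_meas.const_mul l).exp.aestronglyMeasurable
      (rexp (l * Fintype.card ι))
      (ae_of_all _ fun ω => by
        rw [Real.norm_of_nonneg (exp_pos _).le]
        exact exp_le_exp.2 (mul_le_mul_of_nonneg_left (hS_le ω) hl))
  calc P.real {ω | q ≤ ∑ i, (A i).indicator (1 : Ω → ℝ) ω} = P.real {ω | q ≤ S ω} := by
        simp [hS]
    _ ≤ rexp (-l * q) * mgf S P l := measure_ge_le_exp_mul_mgf q hl hint
    _ ≤ rexp (-l * q) * rexp (μ * (rexp l - 1)) := by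
        gcongr; exact mgf_sum_indicator_le_exp hA hindep l
    _ = rexp (-(q * log (q / μ) - (q - μ))) := by
        rw [← exp_add, hexp_l]; congr 1; field_simp; ring
    _ ≤ rexp (-(q - μ) ^ 2 / (2 * q)) := by
        rw [neg_div]
        exact exp_le_exp.2 (neg_le_neg (sq_sub_div_le_mul_log_div_sub hpos hq))

end Probability

theorem order_statistic_left_deviation_general
    {Ω : Type*} [MeasurableSpace Ω] (P : Measure Ω) [IsProbabilityMeasure P]
    (n : ℕ) (ξ : Fin n → Ω → ℝ)
    (hmeas : ∀ i, Measurable (ξ i))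
    (hindep : iIndepFun ξ P)
    (hlaw : ∀ i, Measure.map (ξ i) P = gaussianReal 0 1)
    (q : ℕ) (hq : 1 ≤ q) (hqn : (q : ℝ) ≤ 0.4 * n)
    (m : ℝ) (hm : m = PhibarInv ((q : ℝ) / n))
    (x : ℝ) (hx : x ≤ (q : ℝ) / 8) :
    (P {ω | orderStat (fun i => ξ i ω) q + m ≤ -(2 / m) * Real.sqrt (2 * x / q)}).toReal ≤
      Real.exp (-x) := by
  have hq0 : (0 : ℝ) < q := by exact_mod_cast hq
  have hn : (0 : ℝ) < n := by linarith
  have hPm : Phibar m = q / n :=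
    hm ▸ Phibar_PhibarInv ⟨by positivity, by rw [div_le_iff₀ hn]; linarith⟩
  have hm0 : 0 < m := pos_of_Phibar_lt_half (by rw [hPm, div_lt_iff₀ hn]; linarith)
  set s := √(2 * x / q)
  have hs_half : s ≤ 1 / 2 := Real.sqrt_le_iff.2 ⟨by norm_num, by rw [div_le_iff₀ hq0]; linarith⟩
  set c := m + 2 / m * s
  have hmean : ∑ i, P.real {ω | ξ i ω ≤ -c} = n * Phibar c := by
    simp [measureReal_setOf_le_neg_of_map_eq_gaussianReal (hmeas _) (hlaw _)]
  have hp : n * Phibar c ≤ q * (1 - s) := by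
    have h := Phibar_add_le hm0.le (t := 2 / m * s) (by positivity) (by field_simp; linarith)
    rw [show m * (2 / m * s) / 2 = s by field_simp, hPm] at h
    calc n * Phibar c ≤ n * (q / n * (1 - s)) := by gcongr
      _ = q * (1 - s) := by field_simp
  have hevent : {ω | orderStat (fun i => ξ i ω) q + m ≤ -(2 / m) * s} =
      {ω | orderStat (fun i => ξ i ω) q ≤ -c} := by
    ext ω; simp only [Set.mem_ofPred_eq, c]; constructor <;> intro h <;> linarith
  have hqn' : q ≤ n := by exact_mod_cast (by linarith : (q : ℝ) ≤ n)
  rw [← measureReal_def, hevent, setOf_orderStat_le_eq ξ hq hqn' (-c)]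
  refine (measureReal_le_sum_indicator_le_exp (A := fun i => {ω | ξ i ω ≤ -c})
    (fun i => hmeas i measurableSet_Iic) (hindep.indicator_setOf_le (-c))
    (hmean ▸ mul_pos hn (Phibar_pos c))
    (hmean ▸ hp.trans (by nlinarith [Real.sqrt_nonneg (2 * x / q)]))).trans ?_
  rw [hmean, neg_div]
  refine exp_le_exp.2 (neg_le_neg ?_)
  rw [le_div_iff₀ (by positivity)]
  -- `y ≤ (√y)²` holds for every `y`, as `√y = 0` when `y < 0`
  have hs_sq : 2 * x ≤ s ^ 2 * q := (div_le_iff₀ hq0).1 (Real.sqrt_le_iff.1 le_rfl).2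
  nlinarith [mul_self_le_mul_self (by positivity) (show q * s ≤ q - n * Phibar c by linarith)]

theorem order_statistic_left_deviation
    {Ω : Type*} [MeasurableSpace Ω] (P : Measure Ω) [IsProbabilityMeasure P]
    (n : ℕ) (ξ : Fin n → Ω → ℝ)
    (hmeas : ∀ i, Measurable (ξ i))
    (hindep : iIndepFun ξ P)
    (hlaw : ∀ i, Measure.map (ξ i) P = gaussianReal 0 1)
    (q : ℕ) (hq : 1 ≤ q) (hqn : (q : ℝ) ≤ 0.4 * n)
    (m : ℝ) (hm : m = PhibarInv ((q : ℝ) / n)) (hm0 : 0 ≤ m)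
    (x : ℝ) (hx0 : 0 < x) (hx : x ≤ (q : ℝ) / 8) :
    (P {ω | orderStat (fun i => ξ i ω) q + m ≤ -(2 / m) * Real.sqrt (2 * x / q)}).toReal ≤
      Real.exp (-x) :=
  order_statistic_left_deviation_general P n ξ hmeas hindep hlaw q hq hqn m hm x hx
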